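/- Let 1 < p < ∞ and let X be a real Banach space. If the harmonic Hardy space h^p(Δ; X) of X-valued harmonic functions on the open unit disk has the Kadec–Klee property with respect to the topology β of uniform norm convergence on compact subsets of Δ, then X is midpoint locally uniformly convex. Specifically, if X is not midpoint locally uniformly convex, there exist ε > 0, a unit vector x, and vectors x_n with ‖x_n‖ ≥ ε such that the functions f_n(z) = x + (z^n + z̄^n)x_n/2 satisfy: f_n → f ≡ x in β, ‖f_n‖_p → ‖f‖_p = 1, but ‖f_n − f‖_p^p ≥ (ε^p/2π)∫_0^{2π}|cos θ|^p dθ > 0. -/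

import Mathlib

open MeasureTheory Filter Topology

/-- The radial `p`-mean `((1/2π) ∫_0^{2π} ‖f(re^{iθ})‖^p dθ)^{1/p}`. -/
noncomputable def hpRadial {X : Type*} [NormedAddCommGroup X] (p : ℝ)
    (f : ℂ → X) (r : ℝ) : ℝ :=
  ((2 * Real.pi)⁻¹ *
    ∫ θ in (0 : ℝ)..(2 * Real.pi),
      ‖f ((r : ℂ) * Complex.exp ((θ : ℂ) * Complex.I))‖ ^ p) ^ (1 / p)

/-- The `h^p` norm: `sup_{0 ≤ r < 1}` of the radial `p`-means. -/
noncomputable def hpNorm {X : Type*} [NormedAddCommGroup X] (p : ℝ)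
    (f : ℂ → X) : ℝ :=
  ⨆ r : Set.Ico (0 : ℝ) 1, hpRadial p f (r : ℝ)

/-- `f` is harmonic on the open unit disk `Δ`, characterized by continuity
together with the mean value property. -/
def HarmonicOnDisk {X : Type*} [NormedAddCommGroup X] [NormedSpace ℝ X]
    (f : ℂ → X) : Prop :=
  ContinuousOn f (Metric.ball 0 1) ∧
    ∀ z ∈ Metric.ball (0 : ℂ) 1, ∀ ρ : ℝ, 0 < ρ →
      Metric.closedBall z ρ ⊆ Metric.ball 0 1 →
      f z = (2 * Real.pi)⁻¹ •
        ∫ θ in (0 : ℝ)..(2 * Real.pi), f (z + (ρ : ℂ) * Complex.exp ((θ : ℂ) * Complex.I))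

/-- Membership in the harmonic Hardy space `h^p(Δ; X)`. -/
def MemHp {X : Type*} [NormedAddCommGroup X] [NormedSpace ℝ X] (p : ℝ)
    (f : ℂ → X) : Prop :=
  HarmonicOnDisk f ∧
    BddAbove (Set.range fun r : Set.Ico (0 : ℝ) 1 => hpRadial p f (r : ℝ))

/-!
If the unit vector `x` is not a strongly extreme point of the ball, there are `yₙ` with
`‖yₙ‖ ≥ ε` and `max ‖x + yₙ‖ ‖x - yₙ‖ → 1`. On the closed disk the harmonic function
`x + Re(z^(n+1)) • yₙ` takes values in the segment `[x - yₙ, x + yₙ]` and equals `x` at `0`, so its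
`h^p` norm is squeezed between `1` and `max ‖x ± yₙ‖`. After normalisation these functions converge
to `x` uniformly on compact subsets of the disk, because `z^(n+1) → 0` there. Their distance to `x`
does not go to `0`: on circles of radius close to `1` it is at least `Re(z^(n+1))² ‖yₙ‖` up to an
error `→ 0`, `cos²` has mean `1/2`, and by Jensen the `h^p` norm dominates the circle mean, so the
Kadec–Klee property fails.
-/

open Real

lemma norm_add_smul_le_max {E : Type*} [SeminormedAddCommGroup E] [NormedSpace ℝ E] (a b : E)
    {t : ℝ} (ht : |t| ≤ 1) : ‖a + t • b‖ ≤ max ‖a + b‖ ‖a - b‖ := by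
  rw [abs_le] at ht
  refine convexOn_univ_norm.le_on_segment (Set.mem_univ _) (Set.mem_univ _)
    ⟨(1 + t) / 2, (1 - t) / 2, by linarith, by linarith, by ring, by module⟩

lemma norm_le_max_norm_add_norm_sub {E : Type*} [SeminormedAddCommGroup E] [NormedSpace ℝ E]
    (a b : E) : ‖b‖ ≤ max ‖a + b‖ ‖a - b‖ := by
  have h := norm_sub_le (a + b) (a - b)
  rw [add_sub_sub_cancel, ← two_smul ℝ, norm_smul, Real.norm_two] at h
  linarith [le_max_left ‖a + b‖ ‖a - b‖, le_max_right ‖a + b‖ ‖a - b‖]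

lemma sq_mul_norm_sub_norm_le_norm_add_smul {E : Type*} [SeminormedAddCommGroup E]
    [NormedSpace ℝ E] (a b : E) {t : ℝ} (ht : |t| ≤ 1) : t ^ 2 * ‖b‖ - ‖a‖ ≤ ‖a + t • b‖ := by
  have ht₂ : t ^ 2 ≤ |t| := by rw [← sq_abs, sq]; exact mul_le_of_le_one_left (abs_nonneg t) ht
  have := norm_sub_le (a + t • b) a
  rw [add_sub_cancel_left, norm_smul, Real.norm_eq_abs] at this
  nlinarith [norm_nonneg b]

lemma integral_cos_nat_mul_sq {m : ℕ} (hm : m ≠ 0) :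
    ∫ θ in (0 : ℝ)..2 * π, Real.cos (m * θ) ^ 2 = π := by
  have hm' : (m : ℝ) ≠ 0 := Nat.cast_ne_zero.2 hm
  rw [intervalIntegral.integral_comp_mul_left (fun u => Real.cos u ^ 2) hm', integral_cos_sq,
    show (m : ℝ) * (2 * π) = (2 * m : ℕ) * π by push_cast; ring, Real.sin_nat_mul_pi]
  simp only [Nat.cast_mul, Nat.cast_ofNat, mul_zero, cos_zero, sin_zero, sub_self, zero_add,
    sub_zero, smul_eq_mul]
  field_simp

section HpRadial

variable {X : Type*} [NormedAddCommGroup X] {p : ℝ}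

lemma hpRadial_eq_circleAverage (f : ℂ → X) (r : ℝ) :
    hpRadial p f r = circleAverage (fun z => ‖f z‖ ^ p) 0 r ^ (1 / p) := by
  simp only [hpRadial, circleAverage_def, circleMap_zero, smul_eq_mul]

lemma hpRadial_le_of_forall_norm_le {f : ℂ → X} (hf : Continuous f) (hp : 0 < p) {M : ℝ}
    (hM : 0 ≤ M) (h : ∀ z ∈ Metric.ball (0 : ℂ) 1, ‖f z‖ ≤ M) (r : Set.Ico (0 : ℝ) 1) :
    hpRadial p f r ≤ M := by
  rw [hpRadial_eq_circleAverage, one_div, Real.rpow_inv_le_iff_of_pos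
    (circleAverage_nonneg_of_nonneg fun z _ => by positivity) hM hp]
  refine circleAverage_mono_on_of_le_circle
    ((hf.norm.rpow_const fun _ => Or.inr hp.le).continuousOn.circleIntegrable')
    fun z hz => Real.rpow_le_rpow (norm_nonneg _) (h z ?_) hp.le
  rw [mem_sphere_zero_iff_norm, abs_of_nonneg r.2.1] at hz
  exact mem_ball_zero_iff.2 (hz ▸ r.2.2)

lemma hpRadial_of_forall_norm_eq {f : ℂ → X} (hp : 0 < p) {r C : ℝ} (hC : 0 ≤ C)
    (h : ∀ z ∈ Metric.sphere 0 |r|, ‖f z‖ = C) : hpRadial p f r = C := by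
  rw [hpRadial_eq_circleAverage, circleAverage_const_on_circle fun z hz => by rw [h z hz],
    one_div, Real.rpow_rpow_inv hC hp.ne']

lemma hpRadial_const_smul {f : ℂ → X} [NormedSpace ℝ X] (hp : 0 < p) (a : ℝ) (r : ℝ) :
    hpRadial p (fun z => a • f z) r = |a| * hpRadial p f r := by
  simp only [hpRadial_eq_circleAverage, norm_smul, Real.norm_eq_abs,
    Real.mul_rpow (abs_nonneg a) (norm_nonneg _)]
  rw [show circleAverage (fun z => |a| ^ p * ‖f z‖ ^ p) 0 r
      = |a| ^ p * circleAverage (fun z => ‖f z‖ ^ p) 0 r from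
        circleAverage_fun_smul (a := |a| ^ p) (f := fun z => ‖f z‖ ^ p),
    Real.mul_rpow (by positivity) (circleAverage_nonneg_of_nonneg fun z _ => by positivity),
    one_div, Real.rpow_rpow_inv (abs_nonneg a) hp.ne']

lemma circleAverage_norm_le_hpRadial {f : ℂ → X} (hf : Continuous f) (hp : 1 ≤ p) (r : ℝ) :
    circleAverage (fun z => ‖f z‖) 0 r ≤ hpRadial p f r := by
  have hp₀ : 0 < p := one_pos.trans_le hp
  have hnorm : Continuous fun θ => ‖f (circleMap 0 r θ)‖ :=
    (hf.comp (continuous_circleMap 0 r)).norm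
  rw [hpRadial_eq_circleAverage, one_div, Real.le_rpow_inv_iff_of_pos
    (circleAverage_nonneg_of_nonneg fun z _ => norm_nonneg _)
    (circleAverage_nonneg_of_nonneg fun z _ => by positivity) hp₀,
    circleAverage_eq_intervalAverage, circleAverage_eq_intervalAverage]
  refine (convexOn_rpow hp).map_set_average_le
    (continuousOn_id.rpow_const fun _ _ => Or.inr hp₀.le) isClosed_Ici ?_ ?_
    (.of_forall fun θ => norm_nonneg _) ?_ ?_
  · simp [Set.uIoc_of_le two_pi_pos.le, pi_pos]
  · simp [Set.uIoc_of_le two_pi_pos.le, ENNReal.mul_eq_top]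
  · exact hnorm.integrableOn_uIoc
  · exact (hnorm.rpow_const fun _ => Or.inr hp₀.le).integrableOn_uIoc

end HpRadial

section HpNorm

variable {X : Type*} [NormedAddCommGroup X] {p : ℝ} {f : ℂ → X}

lemma hpRadial_le_hpNorm
    (hf : BddAbove (Set.range fun r : Set.Ico (0 : ℝ) 1 => hpRadial p f (r : ℝ)))
    {r : ℝ} (hr₀ : 0 ≤ r) (hr₁ : r < 1) : hpRadial p f r ≤ hpNorm p f :=
  le_ciSup hf (⟨r, hr₀, hr₁⟩ : Set.Ico (0 : ℝ) 1)

lemma norm_apply_zero_le_hpNorm (hp : 0 < p)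
    (hf : BddAbove (Set.range fun r : Set.Ico (0 : ℝ) 1 => hpRadial p f (r : ℝ))) :
    ‖f 0‖ ≤ hpNorm p f := by
  rw [← hpRadial_of_forall_norm_eq hp (norm_nonneg (f 0)) (f := f) (r := 0) (by simp)]
  exact hpRadial_le_hpNorm hf le_rfl one_pos

lemma bddAbove_hpRadial_of_forall_norm_le (hf : Continuous f) (hp : 0 < p) {M : ℝ} (hM : 0 ≤ M)
    (h : ∀ z ∈ Metric.ball (0 : ℂ) 1, ‖f z‖ ≤ M) :
    BddAbove (Set.range fun r : Set.Ico (0 : ℝ) 1 => hpRadial p f (r : ℝ)) :=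
  ⟨M, Set.forall_mem_range.2 (hpRadial_le_of_forall_norm_le hf hp hM h)⟩

lemma hpNorm_le_of_forall_norm_le (hf : Continuous f) (hp : 0 < p) {M : ℝ} (hM : 0 ≤ M)
    (h : ∀ z ∈ Metric.ball (0 : ℂ) 1, ‖f z‖ ≤ M) : hpNorm p f ≤ M :=
  Real.iSup_le (hpRadial_le_of_forall_norm_le hf hp hM h) hM

lemma hpNorm_const (hp : 0 < p) (x : X) : hpNorm p (fun _ => x) = ‖x‖ :=
  le_antisymm (hpNorm_le_of_forall_norm_le continuous_const hp (norm_nonneg x) fun _ _ => le_rfl)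
    (norm_apply_zero_le_hpNorm hp (bddAbove_hpRadial_of_forall_norm_le continuous_const hp
      (norm_nonneg x) fun _ _ => le_rfl))

lemma hpNorm_const_smul [NormedSpace ℝ X] (hp : 0 < p) (a : ℝ) (f : ℂ → X) :
    hpNorm p (fun z => a • f z) = |a| * hpNorm p f := by
  simp only [hpNorm, hpRadial_const_smul hp, Real.mul_iSup_of_nonneg (abs_nonneg a)]

lemma memHp_const [NormedSpace ℝ X] [CompleteSpace X] (hp : 0 < p) (x : X) :
    MemHp p (fun _ => x) :=
  ⟨⟨continuousOn_const, fun z _ ρ _ _ => (circleAverage_const x z ρ).symm⟩,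
    bddAbove_hpRadial_of_forall_norm_le continuous_const hp (norm_nonneg x) fun _ _ => le_rfl⟩

lemma hpNorm_inv_smul_self [NormedSpace ℝ X] (hp : 0 < p) (hf : 0 < hpNorm p f) :
    hpNorm p (fun z => (hpNorm p f)⁻¹ • f z) = 1 := by
  rw [hpNorm_const_smul hp, abs_inv, abs_of_pos hf, inv_mul_cancel₀ hf.ne']

end HpNorm

section ReZPow

variable {X : Type*} [NormedAddCommGroup X] [NormedSpace ℝ X] {p : ℝ}

/-- `z ↦ a + Re(zᵐ) • b`; for `m = n` this is the paper's `x + (zⁿ + z̄ⁿ) xₙ / 2`. -/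
def reZPow (a b : X) (m : ℕ) (z : ℂ) : X := a + (z ^ m).re • b

lemma continuous_reZPow (a b : X) (m : ℕ) : Continuous (reZPow a b m) := by
  unfold reZPow; fun_prop

lemma reZPow_circleMap (a b : X) (m : ℕ) (r θ : ℝ) :
    reZPow a b m (circleMap 0 r θ) = a + (r ^ m * Real.cos (m * θ)) • b := by
  rw [reZPow, circleMap_zero_pow, circleMap_zero_re]

lemma smul_reZPow (t : ℝ) (a b : X) (m : ℕ) :
    (fun z => t • reZPow a b m z) = reZPow (t • a) (t • b) m := by
  ext z
  simp only [reZPow, smul_add, smul_comm t]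

lemma reZPow_sub_const (a b x : X) (m : ℕ) (z : ℂ) :
    reZPow a b m z - x = reZPow (a - x) b m z := by
  simp only [reZPow]; abel

lemma harmonicOnDisk_reZPow [CompleteSpace X] (a b : X) (m : ℕ) :
    HarmonicOnDisk (reZPow a b m) := by
  refine ⟨(continuous_reZPow a b m).continuousOn, fun z _ ρ _ _ => ?_⟩
  change _ = circleAverage (reZPow a b m) z ρ
  have hL : reZPow a b m = fun w => a + (Complex.reCLM.smulRight b ∘ (· ^ m)) w := rfl
  rw [hL, circleAverage_fun_add (circleIntegrable_const a z ρ)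
    ((Complex.reCLM.smulRight b).continuous.comp (continuous_pow m)).continuousOn.circleIntegrable',
    circleAverage_const, ContinuousLinearMap.circleAverage_comp_comm _
      (continuous_pow m).continuousOn.circleIntegrable',
    (differentiable_pow m).diffContOnCl.circleAverage]
  rfl

lemma norm_reZPow_le (a b : X) (m : ℕ) {z : ℂ} (hz : ‖z‖ ≤ 1) :
    ‖reZPow a b m z‖ ≤ max ‖a + b‖ ‖a - b‖ := by
  refine norm_add_smul_le_max a b ((Complex.abs_re_le_norm _).trans ?_)
  rw [norm_pow]
  exact pow_le_one₀ (norm_nonneg z) hz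

lemma bddAbove_hpRadial_reZPow (hp : 0 < p) (a b : X) (m : ℕ) :
    BddAbove (Set.range fun r : Set.Ico (0 : ℝ) 1 => hpRadial p (reZPow a b m) (r : ℝ)) :=
  bddAbove_hpRadial_of_forall_norm_le (continuous_reZPow a b m) hp
    (le_max_of_le_left (norm_nonneg _)) fun _ hz => norm_reZPow_le a b m (mem_ball_zero_iff.1 hz).le

lemma memHp_reZPow [CompleteSpace X] (hp : 0 < p) (a b : X) (m : ℕ) : MemHp p (reZPow a b m) :=
  ⟨harmonicOnDisk_reZPow a b m, bddAbove_hpRadial_reZPow hp a b m⟩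

lemma hpNorm_reZPow_le (hp : 0 < p) (a b : X) (m : ℕ) :
    hpNorm p (reZPow a b m) ≤ max ‖a + b‖ ‖a - b‖ :=
  hpNorm_le_of_forall_norm_le (continuous_reZPow a b m) hp
    (le_max_of_le_left (norm_nonneg _)) fun _ hz => norm_reZPow_le a b m (mem_ball_zero_iff.1 hz).le

lemma norm_le_hpNorm_reZPow (hp : 0 < p) (a b : X) {m : ℕ} (hm : m ≠ 0) :
    ‖a‖ ≤ hpNorm p (reZPow a b m) := by
  simpa [reZPow, zero_pow hm] using
    norm_apply_zero_le_hpNorm hp (bddAbove_hpRadial_reZPow hp a b m)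

lemma tendstoUniformlyOn_reZPow {ι : Type*} {l : Filter ι} {a b : ι → X} {m : ι → ℕ} {x : X}
    {C : ℝ} (ha : Tendsto a l (𝓝 x)) (hb : ∀ i, ‖b i‖ ≤ C) (hm : Tendsto m l atTop)
    {K : Set ℂ} (hK : K ⊆ Metric.ball 0 1) (hKc : IsCompact K) :
    TendstoUniformlyOn (fun i => reZPow (a i) (b i) (m i)) (fun _ => x) l K := by
  obtain ⟨ρ, ⟨hρ₀, hρ₁⟩, hKρ⟩ := exists_pos_lt_subset_ball one_pos hKc.isClosed hK
  have hbound : Tendsto (fun i => ‖a i - x‖ + ρ ^ m i * C) l (𝓝 0) := by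
    simpa using (tendsto_iff_norm_sub_tendsto_zero.1 ha).add
      (((tendsto_pow_atTop_nhds_zero_of_lt_one hρ₀.le hρ₁).comp hm).mul_const C)
  rw [Metric.tendstoUniformlyOn_iff]
  intro δ hδ
  filter_upwards [hbound.eventually_lt_const hδ] with i hi z hz
  have hzρ : ‖z‖ ^ m i ≤ ρ ^ m i :=
    pow_le_pow_left₀ (norm_nonneg z) (mem_ball_zero_iff.1 (hKρ hz)).le _
  calc dist x (reZPow (a i) (b i) (m i) z) = ‖reZPow (a i - x) (b i) (m i) z‖ := by
        rw [dist_comm, dist_eq_norm, reZPow_sub_const]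
    _ ≤ ‖a i - x‖ + |(z ^ m i).re| * ‖b i‖ := by
        rw [reZPow, ← Real.norm_eq_abs, ← norm_smul]; exact norm_add_le _ _
    _ ≤ ‖a i - x‖ + ρ ^ m i * C := by
        gcongr
        · exact (Complex.abs_re_le_norm _).trans ((norm_pow z _).trans_le hzρ)
        · exact hb i
    _ < δ := hi

lemma le_circleAverage_norm_reZPow (a b : X) {m : ℕ} (hm : m ≠ 0) {r : ℝ} (hr₀ : 0 ≤ r)
    (hr₁ : r ≤ 1) :
    r ^ (2 * m) * ‖b‖ / 2 - ‖a‖ ≤ circleAverage (fun z => ‖reZPow a b m z‖) 0 r := by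
  have hpt (θ : ℝ) :
      (r ^ m * Real.cos (m * θ)) ^ 2 * ‖b‖ - ‖a‖ ≤ ‖reZPow a b m (circleMap 0 r θ)‖ := by
    rw [reZPow_circleMap]
    refine sq_mul_norm_sub_norm_le_norm_add_smul a b ?_
    rw [abs_mul, abs_of_nonneg (pow_nonneg hr₀ m)]
    exact mul_le_one₀ (pow_le_one₀ hr₀ hr₁) (abs_nonneg _) (Real.abs_cos_le_one _)
  have hint : ∫ θ in (0 : ℝ)..2 * π, ((r ^ m * Real.cos (m * θ)) ^ 2 * ‖b‖ - ‖a‖)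
      = r ^ (2 * m) * ‖b‖ * π - 2 * π * ‖a‖ := by
    have hsq (θ : ℝ) : (r ^ m * Real.cos (m * θ)) ^ 2 * ‖b‖ - ‖a‖
        = r ^ (2 * m) * ‖b‖ * Real.cos (m * θ) ^ 2 - ‖a‖ := by ring
    simp_rw [hsq]
    rw [intervalIntegral.integral_sub ((by fun_prop : Continuous _).intervalIntegrable _ _)
      intervalIntegrable_const, intervalIntegral.integral_const_mul, integral_cos_nat_mul_sq hm,
      intervalIntegral.integral_const, smul_eq_mul]
    ring
  rw [circleAverage_def, smul_eq_mul]
  calc r ^ (2 * m) * ‖b‖ / 2 - ‖a‖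
      = (2 * π)⁻¹ * ∫ θ in (0 : ℝ)..2 * π, ((r ^ m * Real.cos (m * θ)) ^ 2 * ‖b‖ - ‖a‖) := by
        rw [hint]; field_simp
    _ ≤ _ := by
        gcongr
        exact intervalIntegral.integral_mono_on two_pi_pos.le
          ((by fun_prop : Continuous _).intervalIntegrable _ _)
          (((continuous_reZPow a b m).comp (continuous_circleMap 0 r)).norm.intervalIntegrable _ _)
          fun θ _ => hpt θ

lemma le_hpNorm_reZPow (hp : 1 ≤ p) (a b : X) {m : ℕ} (hm : m ≠ 0) :
    ‖b‖ / 2 - ‖a‖ ≤ hpNorm p (reZPow a b m) := by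
  have hlim : Tendsto (fun r : ℝ => r ^ (2 * m) * ‖b‖ / 2 - ‖a‖) (𝓝[<] 1)
      (𝓝 (‖b‖ / 2 - ‖a‖)) := by
    have : Continuous fun r : ℝ => r ^ (2 * m) * ‖b‖ / 2 - ‖a‖ := by fun_prop
    simpa using (this.tendsto 1).mono_left nhdsWithin_le_nhds
  refine le_of_tendsto hlim ?_
  filter_upwards [Ioo_mem_nhdsLT one_pos] with r hr
  exact (le_circleAverage_norm_reZPow a b hm hr.1.le hr.2.le).trans <|
    (circleAverage_norm_le_hpRadial (continuous_reZPow a b m) hp r).trans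
    (hpRadial_le_hpNorm (bddAbove_hpRadial_reZPow (one_pos.trans_le hp) a b m) hr.1.le hr.2)

lemma not_tendsto_hpNorm_reZPow_sub_nhds_zero {ι : Type*} {l : Filter ι} [l.NeBot]
    (hp : 1 ≤ p) {a b : ι → X} {m : ι → ℕ} {x : X} {ε : ℝ} (hε : 0 < ε)
    (ha : Tendsto a l (𝓝 x)) (hb : ∀ i, ε ≤ ‖b i‖) (hm : ∀ i, m i ≠ 0) :
    ¬Tendsto (fun i => hpNorm p (fun z => reZPow (a i) (b i) (m i) z - x)) l (𝓝 0) := by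
  intro h
  have hlow : Tendsto (fun i => ε / 2 - ‖a i - x‖) l (𝓝 (ε / 2)) := by
    simpa using (tendsto_iff_norm_sub_tendsto_zero.1 ha).const_sub (ε / 2)
  refine (half_pos hε).not_ge (le_of_tendsto_of_tendsto hlow h (.of_forall fun i => ?_))
  simp only [reZPow_sub_const]
  linarith [hb i, le_hpNorm_reZPow hp (a i - x) (b i) (hm i)]

end ReZPow

theorem stmt19 {X : Type*} [NormedAddCommGroup X] [NormedSpace ℝ X] [CompleteSpace X]
    (p : ℝ) (hp : 1 < p)
    (hKK : ∀ (F : ℕ → ℂ → X) (f : ℂ → X),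
      (∀ n, MemHp p (F n)) → MemHp p f →
      (∀ n, hpNorm p (F n) = 1) → hpNorm p f = 1 →
      (∀ K : Set ℂ, K ⊆ Metric.ball 0 1 → IsCompact K →
        TendstoUniformlyOn F f atTop K) →
      Tendsto (fun n => hpNorm p (fun z => F n z - f z)) atTop (𝓝 0)) :
    ∀ x : X, ‖x‖ = 1 → ∀ ε : ℝ, 0 < ε → ∃ δ : ℝ, 0 < δ ∧
      ∀ y : X, ε ≤ ‖y‖ → 1 + δ ≤ max ‖x + y‖ ‖x - y‖ := by
  intro x hx ε hε
  by_contra! hcon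
  have hp₀ : 0 < p := one_pos.trans hp
  choose y hy hmax using fun n : ℕ => hcon (1 / (n + 1)) Nat.one_div_pos_of_nat
  set c : ℕ → ℝ := fun n => hpNorm p (reZPow x (y n) (n + 1))
  have hc₁ (n : ℕ) : 1 ≤ c n := hx ▸ norm_le_hpNorm_reZPow hp₀ x (y n) n.succ_ne_zero
  have hc₂ (n : ℕ) : c n ≤ 1 + 1 / (n + 1) :=
    ((hpNorm_reZPow_le hp₀ x (y n) _).trans_lt (hmax n)).le
  have hc : Tendsto c atTop (𝓝 1) := tendsto_of_tendsto_of_tendsto_of_le_of_le tendsto_const_nhds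
    (by simpa using (tendsto_one_div_add_atTop_nhds_zero_nat (𝕜 := ℝ)).const_add 1) hc₁ hc₂
  have ha : Tendsto (fun n => (c n)⁻¹ • x) atTop (𝓝 x) := by
    simpa using (hc.inv₀ one_ne_zero).smul_const x
  have hδ (n : ℕ) : 1 / ((n : ℝ) + 1) ≤ 1 := by
    simpa using Nat.one_div_le_one_div (α := ℝ) n.zero_le
  have hb (n : ℕ) : ‖(c n)⁻¹ • y n‖ = ‖y n‖ / c n := by
    rw [norm_smul, norm_inv, Real.norm_of_nonneg (zero_le_one.trans (hc₁ n)), inv_mul_eq_div]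
  have hb₁ (n : ℕ) : ‖(c n)⁻¹ • y n‖ ≤ 2 := by
    rw [hb]
    exact (div_le_self (norm_nonneg _) (hc₁ n)).trans <|
      (norm_le_max_norm_add_norm_sub x (y n)).trans ((hmax n).le.trans (by linarith [hδ n]))
  have hb₂ (n : ℕ) : ε / 2 ≤ ‖(c n)⁻¹ • y n‖ := by
    rw [hb]
    exact div_le_div₀ (norm_nonneg _) (hy n) (zero_lt_one.trans_le (hc₁ n))
      ((hc₂ n).trans (by linarith [hδ n]))
  refine not_tendsto_hpNorm_reZPow_sub_nhds_zero hp.le (half_pos hε) ha hb₂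
    (fun n => n.succ_ne_zero)
    (hKK _ _ (fun n => memHp_reZPow hp₀ _ _ _) (memHp_const hp₀ x) (fun n => ?_)
      (hx ▸ hpNorm_const hp₀ x)
      fun K hK hKc => tendstoUniformlyOn_reZPow ha hb₁ (tendsto_add_atTop_nat 1) hK hKc)
  rw [← smul_reZPow, hpNorm_inv_smul_self hp₀ (zero_lt_one.trans_le (hc₁ n))]
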